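/- Let Λ be a locally convex row-finite k-graph. The following are equivalent: (1) Λ is aperiodic; (2) Per(Λ) = {0}; (3) there are no distinct μ,ν ∈ Λ with μ ∼_Λ ν. -/

import Mathlib

/-!
Common definitions: higher-rank graphs (`k`-graphs), boundary paths, the
equivalence relation `∼_Λ`, the periodicity group `Per(Λ)`, maximal tails,
hereditary/saturated sets, and (an axiomatization of) the Farthing
desourcification `Λ̄` of a locally convex row-finite `k`-graph `Λ`.
-/

/-- A `k`-graph: a countable small category `Λ` equipped with a degree functor
`d : Λ → ℕ^k` satisfying the factorization property.  Elements of `Path` are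
the morphisms ("paths"); the vertices are the identity morphisms (the paths `v`
with `r v = v`, equivalently of degree `0`).  The composition `comp μ ν` is
only meaningful when `s μ = r ν`. -/
structure KGraph (k : ℕ) where
  Path : Type
  countable_path : Countable Path
  nonempty_path : Nonempty Path
  r : Path → Path
  s : Path → Path
  d : Path → Fin k → ℕ
  comp : Path → Path → Path
  d_r : ∀ μ, d (r μ) = 0
  d_s : ∀ μ, d (s μ) = 0
  r_r : ∀ μ, r (r μ) = r μ
  s_r : ∀ μ, s (r μ) = r μ
  r_s : ∀ μ, r (s μ) = s μ
  s_s : ∀ μ, s (s μ) = s μ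
  comp_id : ∀ μ, comp μ (s μ) = μ
  id_comp : ∀ μ, comp (r μ) μ = μ
  r_comp : ∀ μ ν, s μ = r ν → r (comp μ ν) = r μ
  s_comp : ∀ μ ν, s μ = r ν → s (comp μ ν) = s ν
  d_comp : ∀ μ ν, s μ = r ν → d (comp μ ν) = d μ + d ν
  comp_assoc : ∀ μ ν ρ, s μ = r ν → s ν = r ρ →
    comp (comp μ ν) ρ = comp μ (comp ν ρ)
  factorization : ∀ (lam : Path) (m n : Fin k → ℕ), d lam = m + n →
    ∃! p : Path × Path, d p.1 = m ∧ d p.2 = n ∧ s p.1 = r p.2 ∧ lam = comp p.1 p.2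

namespace KGraph

variable {k : ℕ}

/-- The vertices of a `k`-graph are its identity morphisms. -/
def IsVertex (Λ : KGraph k) (v : Λ.Path) : Prop := Λ.r v = v

/-- `Λ.boundedPaths n` is the set `Λ^{≤ n}`: paths `λ` with `d λ ≤ n` such that
`d(λ)_i < n_i` implies `s(λ)Λ^{e_i} = ∅`. -/
def boundedPaths (Λ : KGraph k) (n : Fin k → ℕ) : Set Λ.Path :=
  {lam | Λ.d lam ≤ n ∧ ∀ i : Fin k, Λ.d lam i < n i →
    ∀ e, Λ.r e = Λ.s lam → Λ.d e ≠ Pi.single i 1}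

/-- `Λ` is row-finite if every `vΛ^n` is finite. -/
def RowFinite (Λ : KGraph k) : Prop :=
  ∀ (v : Λ.Path) (n : Fin k → ℕ), Λ.IsVertex v →
    {lam | Λ.r lam = v ∧ Λ.d lam = n}.Finite

/-- `Λ` is locally convex if for `i ≠ j`, `λ ∈ vΛ^{e_i}` and `μ ∈ vΛ^{e_j}`
one has `s(λ)Λ^{e_j} ≠ ∅` (by symmetry in `i, j` this also gives
`s(μ)Λ^{e_i} ≠ ∅`). -/
def LocallyConvex (Λ : KGraph k) : Prop :=
  ∀ i j : Fin k, i ≠ j → ∀ lam mu : Λ.Path, Λ.r lam = Λ.r mu →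
    Λ.d lam = Pi.single i 1 → Λ.d mu = Pi.single j 1 →
    ∃ lam', Λ.r lam' = Λ.s lam ∧ Λ.d lam' = Pi.single j 1

end KGraph

/-- A boundary path of `Λ`: a degree-preserving functor `x : Ω_{k,m} → Λ`
(`m = deg ∈ (ℕ ∪ {∞})^k`) such that `p ≤ m` and `p_i = m_i` imply
`x(p)Λ^{e_i} = ∅`.  `seg p q` is the path `x(p,q)`, meaningful for
`p ≤ q ≤ deg`; `seg p p` is the vertex `x(p)`. -/
structure BoundaryPath {k : ℕ} (Λ : KGraph k) where
  deg : Fin k → ℕ∞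
  seg : (Fin k → ℕ) → (Fin k → ℕ) → Λ.Path
  seg_d : ∀ p q : Fin k → ℕ, p ≤ q → (∀ i, (q i : ℕ∞) ≤ deg i) →
    Λ.d (seg p q) = q - p
  seg_r : ∀ p q : Fin k → ℕ, p ≤ q → (∀ i, (q i : ℕ∞) ≤ deg i) →
    Λ.r (seg p q) = seg p p
  seg_s : ∀ p q : Fin k → ℕ, p ≤ q → (∀ i, (q i : ℕ∞) ≤ deg i) →
    Λ.s (seg p q) = seg q q
  seg_comp : ∀ p q t : Fin k → ℕ, p ≤ q → q ≤ t → (∀ i, (t i : ℕ∞) ≤ deg i) →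
    Λ.comp (seg p q) (seg q t) = seg p t
  boundary : ∀ p : Fin k → ℕ, (∀ i, (p i : ℕ∞) ≤ deg i) →
    ∀ i : Fin k, (p i : ℕ∞) = deg i →
      ∀ e, Λ.r e = seg p p → Λ.d e ≠ Pi.single i 1

/-- `emin m e` is the coordinatewise minimum `m ∧ e` of `m ∈ ℕ^k` with the
(possibly infinite) degree `e ∈ (ℕ ∪ {∞})^k`, as an element of `ℕ^k`. -/
noncomputable def emin {k : ℕ} (m : Fin k → ℕ) (e : Fin k → ℕ∞) : Fin k → ℕ :=
  fun i => (min ((m i : ℕ∞)) (e i)).toNat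

/-- Equality of boundary paths (of the same degree), as functors. -/
def BPEq {k : ℕ} {Λ : KGraph k} (x y : BoundaryPath Λ) : Prop :=
  x.deg = y.deg ∧ ∀ p q : Fin k → ℕ, p ≤ q → (∀ i, (q i : ℕ∞) ≤ x.deg i) →
    x.seg p q = y.seg p q

/-- `IsExtension Λ lam x y` says that `y = lam · x` is the (unique) boundary
path with `y(0, d lam) = lam` and `y(d lam, d lam + p) = x(0, p)`. -/
def IsExtension {k : ℕ} (Λ : KGraph k) (lam : Λ.Path) (x y : BoundaryPath Λ) :
    Prop :=
  (∀ i, y.deg i = (Λ.d lam i : ℕ∞) + x.deg i) ∧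
  y.seg 0 (Λ.d lam) = lam ∧
  ∀ p : Fin k → ℕ, (∀ i, (p i : ℕ∞) ≤ x.deg i) →
    y.seg (Λ.d lam) (Λ.d lam + p) = x.seg 0 p

/-- The relation `μ ∼_Λ ν`: `s μ = s ν` and `μx = νx` for every boundary path
`x ∈ s(μ)Λ^{≤∞}`. -/
def KGraph.peq {k : ℕ} (Λ : KGraph k) (μ ν : Λ.Path) : Prop :=
  Λ.s μ = Λ.s ν ∧ ∀ x y z : BoundaryPath Λ, x.seg 0 0 = Λ.s μ →
    IsExtension Λ μ x y → IsExtension Λ ν x z → BPEq y z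

/-- `Per(Λ) = {d μ - d ν : μ ∼_Λ ν} ⊆ ℤ^k`. -/
def KGraph.Per {k : ℕ} (Λ : KGraph k) : Set (Fin k → ℤ) :=
  {g | ∃ μ ν : Λ.Path, Λ.peq μ ν ∧ g = fun i => (Λ.d μ i : ℤ) - (Λ.d ν i : ℤ)}

/-- `Λ` is aperiodic if for every vertex `v` there is a boundary path
`x ∈ vΛ^{≤∞}` such that distinct `μ, ν ∈ Λv` have `μx ≠ νx`. -/
def KGraph.Aperiodic {k : ℕ} (Λ : KGraph k) : Prop :=
  ∀ v : Λ.Path, Λ.IsVertex v → ∃ x : BoundaryPath Λ, x.seg 0 0 = v ∧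
    ∀ μ ν : Λ.Path, Λ.s μ = v → Λ.s ν = v → μ ≠ ν →
      ∀ y z : BoundaryPath Λ, IsExtension Λ μ x y → IsExtension Λ ν x z →
        ¬ BPEq y z

/-- A maximal tail: a nonempty set `T` of vertices such that (1) `s λ ∈ T`
implies `r λ ∈ T`; (2) for `v ∈ T` and `n ∈ ℕ^k` there is `λ ∈ vΛ^{≤n}` with
`s λ ∈ T`; (3) any `v, w ∈ T` are connected via `μ ∈ vΛ`, `ν ∈ wΛ` with
`s μ = s ν`. -/
def KGraph.IsMaximalTail {k : ℕ} (Λ : KGraph k) (T : Set Λ.Path) : Prop :=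
  T.Nonempty ∧ (∀ v ∈ T, Λ.IsVertex v) ∧
  (∀ lam : Λ.Path, Λ.s lam ∈ T → Λ.r lam ∈ T) ∧
  (∀ v ∈ T, ∀ n : Fin k → ℕ,
    ∃ lam ∈ Λ.boundedPaths n, Λ.r lam = v ∧ Λ.s lam ∈ T) ∧
  (∀ v ∈ T, ∀ w ∈ T, ∃ μ ν : Λ.Path, Λ.r μ = v ∧ Λ.r ν = w ∧ Λ.s μ = Λ.s ν)

/-- `H_{Per(Λ)}`: the set of vertices `v` such that for all `μ ∈ vΛ` and
`m ∈ ℕ^k` with `d μ - m ∈ Per(Λ)` there exists `ν ∈ vΛ^m` with `μ ∼_Λ ν`. -/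
def KGraph.HPer {k : ℕ} (Λ : KGraph k) : Set Λ.Path :=
  {v | Λ.IsVertex v ∧ ∀ μ : Λ.Path, Λ.r μ = v → ∀ m : Fin k → ℕ,
    (fun i => (Λ.d μ i : ℤ) - (m i : ℤ)) ∈ Λ.Per →
    ∃ ν : Λ.Path, Λ.r ν = v ∧ Λ.d ν = m ∧ Λ.peq μ ν}

/-- A set of vertices `H` is hereditary if `r λ ∈ H` implies `s λ ∈ H`. -/
def KGraph.Hereditary {k : ℕ} (Λ : KGraph k) (H : Set Λ.Path) : Prop :=
  ∀ lam : Λ.Path, Λ.r lam ∈ H → Λ.s lam ∈ H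

/-- A set of vertices `H` is saturated if `s(vΛ^{≤n}) ⊆ H` for some `n ∈ ℕ^k`
implies `v ∈ H`. -/
def KGraph.Saturated {k : ℕ} (Λ : KGraph k) (H : Set Λ.Path) : Prop :=
  ∀ v : Λ.Path, Λ.IsVertex v →
    (∃ n : Fin k → ℕ, ∀ lam ∈ Λ.boundedPaths n, Λ.r lam = v → Λ.s lam ∈ H) →
    v ∈ H

/-- `Σ(H)`: the smallest saturated set containing `H`. -/
def KGraph.SatClosure {k : ℕ} (Λ : KGraph k) (H : Set Λ.Path) : Set Λ.Path :=
  ⋂₀ {S : Set Λ.Path | H ⊆ S ∧ Λ.Saturated S}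

/-- A boundary path `x` is cofinal if every vertex `v` admits `n ≤ d x` with
`vΛx(n) ≠ ∅`. -/
def KGraph.CofinalBP {k : ℕ} (Λ : KGraph k) (x : BoundaryPath Λ) : Prop :=
  ∀ v : Λ.Path, Λ.IsVertex v → ∃ n : Fin k → ℕ,
    (∀ i, (n i : ℕ∞) ≤ x.deg i) ∧ ∃ μ : Λ.Path, Λ.r μ = v ∧ Λ.s μ = x.seg n n

/-- `Λ` is cofinal if all of its boundary paths are cofinal. -/
def KGraph.Cofinal {k : ℕ} (Λ : KGraph k) : Prop :=
  ∀ x : BoundaryPath Λ, Λ.CofinalBP x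

/-- `T(v) = {s μ : μ ∈ vΛ}`, the smallest hereditary set containing `v`. -/
def KGraph.tree {k : ℕ} (Λ : KGraph k) (v : Λ.Path) : Set Λ.Path :=
  {w | ∃ μ : Λ.Path, Λ.r μ = v ∧ Λ.s μ = w}

/-- `Δ(H₁,H₂) = {v ∈ H₁ : T(v) ∩ H₂ = ∅}`. -/
def KGraph.Delta {k : ℕ} (Λ : KGraph k) (H₁ H₂ : Set Λ.Path) : Set Λ.Path :=
  {v ∈ H₁ | Λ.tree v ∩ H₂ = ∅}

/-- `Ω(H₁,H₂) = {v ∈ H₁ \ H₂ : T(v) ∩ H₂ ≠ ∅}`. -/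
def KGraph.Omega {k : ℕ} (Λ : KGraph k) (H₁ H₂ : Set Λ.Path) : Set Λ.Path :=
  {v ∈ H₁ \ H₂ | (Λ.tree v ∩ H₂).Nonempty}

/-- The relation `H₁ ≻ H₂`. -/
def KGraph.Succ {k : ℕ} (Λ : KGraph k) (H₁ H₂ : Set Λ.Path) : Prop :=
  H₂ ⊆ H₁ ∧ (Λ.Delta H₁ H₂).Nonempty ∧
  ∀ v ∈ Λ.Omega H₁ H₂, ∃ n : Fin k → ℕ,
    ∀ lam ∈ Λ.boundedPaths n, Λ.r lam = v → Λ.s lam ∈ H₂ ∪ Λ.Delta H₁ H₂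

/-- `IsGlue Λ x n y p z` says that `z` is the boundary path
`x(0, n ∧ d x) · σ^{p ∧ d y}(y)`. -/
def IsGlue {k : ℕ} (Λ : KGraph k) (x : BoundaryPath Λ) (n : Fin k → ℕ)
    (y : BoundaryPath Λ) (p : Fin k → ℕ) (z : BoundaryPath Λ) : Prop :=
  (∀ i, z.deg i = (emin n x.deg i : ℕ∞) + (y.deg i - (emin p y.deg i : ℕ∞))) ∧
  z.seg 0 (emin n x.deg) = x.seg 0 (emin n x.deg) ∧
  ∀ t : Fin k → ℕ, (∀ i, ((emin p y.deg i + t i : ℕ) : ℕ∞) ≤ y.deg i) →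
    z.seg (emin n x.deg) (emin n x.deg + t) =
      y.seg (emin p y.deg) (emin p y.deg + t)

/-- The Farthing desourcification `Λ̄ = P_Λ/≈` of `Λ`: a `k`-graph `bar`
without sources whose morphisms are the classes `cls x m n = [x;(m,n)]`
(`x ∈ Λ^{≤∞}`, `m ≤ n ∈ ℕ^k`), where `[x;(m,n)] = [y;(p,q)]` iff
(P1) `x(m ∧ d x, n ∧ d x) = y(p ∧ d y, q ∧ d y)`,
(P2) `m - m ∧ d x = p - p ∧ d y` and (P3) `n - m = q - p`; together with the
range, source, degree and composition formulas, the canonical embedding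
`emb : Λ → Λ̄` (`λ ↦ [λx;(0, d λ)]`) and the projection `proj = π : Λ̄ → Λ`,
`π [x;(m,n)] = [x;(m ∧ d x, n ∧ d x)]`. -/
structure Desourcification {k : ℕ} (Λ : KGraph k) where
  bar : KGraph k
  noSources : ∀ v : bar.Path, bar.IsVertex v → ∀ i : Fin k,
    ∃ e, bar.r e = v ∧ bar.d e = Pi.single i 1
  cls : BoundaryPath Λ → (Fin k → ℕ) → (Fin k → ℕ) → bar.Path
  cls_surjective : ∀ μ : bar.Path,
    ∃ (x : BoundaryPath Λ) (m : Fin k → ℕ), μ = cls x m (m + bar.d μ)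
  cls_eq_iff : ∀ (x : BoundaryPath Λ) (m n : Fin k → ℕ) (y : BoundaryPath Λ)
    (p q : Fin k → ℕ), m ≤ n → p ≤ q →
    (cls x m n = cls y p q ↔
      (x.seg (emin m x.deg) (emin n x.deg) =
          y.seg (emin p y.deg) (emin q y.deg) ∧
        m - emin m x.deg = p - emin p y.deg ∧
        n - m = q - p))
  d_cls : ∀ (x : BoundaryPath Λ) (m n : Fin k → ℕ), m ≤ n →
    bar.d (cls x m n) = n - m
  r_cls : ∀ (x : BoundaryPath Λ) (m n : Fin k → ℕ), m ≤ n →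
    bar.r (cls x m n) = cls x m m
  s_cls : ∀ (x : BoundaryPath Λ) (m n : Fin k → ℕ), m ≤ n →
    bar.s (cls x m n) = cls x n n
  comp_cls : ∀ (x y : BoundaryPath Λ) (m n p q : Fin k → ℕ), m ≤ n → p ≤ q →
    bar.s (cls x m n) = bar.r (cls y p q) →
    ∀ z : BoundaryPath Λ, IsGlue Λ x n y p z →
      bar.comp (cls x m n) (cls y p q) = cls z m (n + (q - p))
  emb : Λ.Path → bar.Path
  emb_injective : Function.Injective emb
  emb_r : ∀ lam : Λ.Path, emb (Λ.r lam) = bar.r (emb lam)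
  emb_s : ∀ lam : Λ.Path, emb (Λ.s lam) = bar.s (emb lam)
  emb_d : ∀ lam : Λ.Path, bar.d (emb lam) = Λ.d lam
  emb_comp : ∀ μ ν : Λ.Path, Λ.s μ = Λ.r ν →
    emb (Λ.comp μ ν) = bar.comp (emb μ) (emb ν)
  emb_cls : ∀ (lam : Λ.Path) (x y : BoundaryPath Λ), x.seg 0 0 = Λ.s lam →
    IsExtension Λ lam x y → emb lam = cls y 0 (Λ.d lam)
  proj : bar.Path → Λ.Path
  proj_cls : ∀ (x : BoundaryPath Λ) (m n : Fin k → ℕ), m ≤ n →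
    proj (cls x m n) = x.seg (emin m x.deg) (emin n x.deg)

/-- `IsInfClass D x p z` says that `z` is the infinite path `[x;(p,∞)]` of
`Λ̄`, i.e. `z(m,n) = [x;(p+m, p+n)]`. -/
def IsInfClass {k : ℕ} {Λ : KGraph k} (D : Desourcification Λ)
    (x : BoundaryPath Λ) (p : Fin k → ℕ) (z : BoundaryPath D.bar) : Prop :=
  (∀ i, z.deg i = (⊤ : ℕ∞)) ∧
  ∀ m n : Fin k → ℕ, m ≤ n → z.seg m n = D.cls x (p + m) (p + n)

/-- `IsShift x n y` says that `y = σ^n(x)` is the `n`-shifted boundary path,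
`σ^n(x)(p,q) = x(p+n, q+n)`, of degree `d x - n`. -/
def IsShift {k : ℕ} {Λ : KGraph k} (x : BoundaryPath Λ) (n : Fin k → ℕ)
    (y : BoundaryPath Λ) : Prop :=
  (∀ i, y.deg i = x.deg i - (n i : ℕ∞)) ∧
  ∀ p q : Fin k → ℕ, p ≤ q → (∀ i, (q i : ℕ∞) ≤ y.deg i) →
    y.seg p q = x.seg (p + n) (q + n)

/-!
Aperiodicity gives (3): if `μ ∼_Λ ν` with `μ ≠ ν`, then `μx = νx` for the boundary path `x` at
`s μ` that aperiodicity provides. Here `μx` exists because `Λ` is locally convex: it is the limit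
of the finite paths `μ x(0, (n, …, n) ∧ d x)`. Clearly (3) gives `Per(Λ) = {0}`.

For `Per(Λ) = {0}` ⇒ aperiodic, build `x ∈ vΛ^{≤∞}` as the limit of a chain of finite paths:
enumerate all pairs `(a, b)` of positions and at stage `n` extend the current path so that it
looks different from `a` and from `b`, if some extension does; interleaved steps into
`Λ^{≤ (n, …, n)}` make the limit a boundary path. If `μx = νx` with `μ ≠ ν`, then `x` looks the
same from `a = c - d μ` and from `b = c - d ν` (`c = d μ ∨ d ν`), and `a ≠ b`. So `(a, b)` was
never separated: all extensions of some stage `λ` agree at `a` and `b`, and local convexity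
turns this into `λ(a, d λ) ∼_Λ λ(b, d λ)`, putting `b - a ≠ 0` in `Per(Λ)`.
-/

namespace KGraph

variable {k : ℕ} {Λ : KGraph k}

section Factorization

lemma isVertex_s (μ : Λ.Path) : Λ.IsVertex (Λ.s μ) := Λ.r_s μ

lemma r_eq_and_s_eq_of_d_eq_zero {μ : Λ.Path} (h : Λ.d μ = 0) :
    Λ.r μ = μ ∧ Λ.s μ = μ := by
  have key := (Λ.factorization μ 0 0 (by simp [h])).unique
    (y₁ := (Λ.r μ, μ)) (y₂ := (μ, Λ.s μ))
    ⟨Λ.d_r μ, h, Λ.s_r μ, (Λ.id_comp μ).symm⟩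
    ⟨h, Λ.d_s μ, (Λ.r_s μ).symm, (Λ.comp_id μ).symm⟩
  exact ⟨congrArg Prod.fst key, (congrArg Prod.snd key).symm⟩

open Classical in
variable (Λ) in
/-- The factorization `ρ = ρ(0, p) ρ(p, d ρ)`; a junk value when `¬ p ≤ d ρ`. -/
noncomputable def factor (ρ : Λ.Path) (p : Fin k → ℕ) : Λ.Path × Λ.Path :=
  if h : p ≤ Λ.d ρ then
    (Λ.factorization ρ p (Λ.d ρ - p) (add_tsub_cancel_of_le h).symm).exists.choose
  else (ρ, ρ)

lemma factor_spec {ρ : Λ.Path} {p : Fin k → ℕ} (h : p ≤ Λ.d ρ) :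
    Λ.d (Λ.factor ρ p).1 = p ∧ Λ.d (Λ.factor ρ p).2 = Λ.d ρ - p ∧
      Λ.s (Λ.factor ρ p).1 = Λ.r (Λ.factor ρ p).2 ∧
      ρ = Λ.comp (Λ.factor ρ p).1 (Λ.factor ρ p).2 := by
  rw [factor, dif_pos h]
  exact (Λ.factorization ρ _ _ (add_tsub_cancel_of_le h).symm).exists.choose_spec

lemma factor_eq {ρ α β : Λ.Path} (hsr : Λ.s α = Λ.r β) (hρ : ρ = Λ.comp α β) :
    Λ.factor ρ (Λ.d α) = (α, β) := by
  have hd : Λ.d ρ = Λ.d α + Λ.d β := hρ ▸ Λ.d_comp α β hsr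
  have hle : Λ.d α ≤ Λ.d ρ := hd ▸ le_self_add
  have hβ : Λ.d β = Λ.d ρ - Λ.d α := by rw [hd, add_tsub_cancel_left]
  exact (Λ.factorization ρ _ _ (add_tsub_cancel_of_le hle).symm).unique
    (Λ.factor_spec hle) ⟨rfl, hβ, hsr, hρ⟩

lemma comp_left_cancel {α β β' : Λ.Path} (hβ : Λ.s α = Λ.r β) (hβ' : Λ.s α = Λ.r β')
    (h : Λ.comp α β = Λ.comp α β') : β = β' := by
  have := (factor_eq hβ rfl).symm.trans (h ▸ factor_eq hβ' rfl)
  exact congrArg Prod.snd this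

lemma factor_zero (ρ : Λ.Path) : Λ.factor ρ 0 = (Λ.r ρ, ρ) :=
  Λ.d_r ρ ▸ factor_eq (Λ.s_r ρ) (Λ.id_comp ρ).symm

lemma factor_d (ρ : Λ.Path) : Λ.factor ρ (Λ.d ρ) = (ρ, Λ.s ρ) :=
  factor_eq (Λ.r_s ρ).symm (Λ.comp_id ρ).symm

variable (Λ) in
/-- The segment `ρ(p, q)` of `ρ`, for `p ≤ q ≤ d ρ`. -/
noncomputable def segment (ρ : Λ.Path) (p q : Fin k → ℕ) : Λ.Path :=
  (Λ.factor (Λ.factor ρ q).1 p).2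

lemma segment_zero_left (ρ : Λ.Path) (q : Fin k → ℕ) :
    Λ.segment ρ 0 q = (Λ.factor ρ q).1 := by
  rw [segment, factor_zero]

lemma segment_d_right (ρ : Λ.Path) (p : Fin k → ℕ) :
    Λ.segment ρ p (Λ.d ρ) = (Λ.factor ρ p).2 := by
  rw [segment, factor_d]

lemma segment_zero_d (ρ : Λ.Path) : Λ.segment ρ 0 (Λ.d ρ) = ρ := by
  rw [segment_zero_left, factor_d]

lemma d_segment {ρ : Λ.Path} {p q : Fin k → ℕ} (hpq : p ≤ q) (hq : q ≤ Λ.d ρ) :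
    Λ.d (Λ.segment ρ p q) = q - p := by
  have hA := (factor_spec hq).1
  rw [segment, (factor_spec (by rwa [hA] : p ≤ _)).2.1, hA]

lemma eq_comp_segment {ρ : Λ.Path} {p q : Fin k → ℕ} (hpq : p ≤ q) (hq : q ≤ Λ.d ρ) :
    Λ.s (Λ.segment ρ 0 p) = Λ.r (Λ.segment ρ p q) ∧
      Λ.s (Λ.segment ρ p q) = Λ.r (Λ.segment ρ q (Λ.d ρ)) ∧
      ρ = Λ.comp (Λ.segment ρ 0 p)
        (Λ.comp (Λ.segment ρ p q) (Λ.segment ρ q (Λ.d ρ))) := by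
  obtain ⟨hA, -, hAB, hρ⟩ := factor_spec hq
  obtain ⟨hC, -, hCD, hA'⟩ := factor_spec (by rwa [hA] : p ≤ Λ.d (Λ.factor ρ q).1)
  set A := (Λ.factor ρ q).1
  set B := (Λ.factor ρ q).2
  set C := (Λ.factor A p).1
  set D := (Λ.factor A p).2
  have hDB : Λ.s D = Λ.r B := by rw [← Λ.s_comp C D hCD, ← hA']; exact hAB
  have hρ' : ρ = Λ.comp C (Λ.comp D B) := by
    rw [hρ, hA', Λ.comp_assoc C D B hCD hDB]
  have hfac : Λ.factor ρ p = (C, Λ.comp D B) :=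
    hC ▸ factor_eq (by rw [Λ.r_comp D B hDB]; exact hCD) hρ'
  have h0p : Λ.segment ρ 0 p = C := by rw [segment_zero_left, hfac]
  have hqd : Λ.segment ρ q (Λ.d ρ) = B := by rw [segment_d_right]
  rw [h0p, hqd]
  exact ⟨hCD, hDB, hρ'⟩

lemma segment_eq_of_comp {ρ α β γ : Λ.Path} {p q : Fin k → ℕ} (hαβ : Λ.s α = Λ.r β)
    (hβγ : Λ.s β = Λ.r γ) (hρ : ρ = Λ.comp α (Λ.comp β γ)) (hα : Λ.d α = p)
    (hβ : Λ.d β = q - p) (hpq : p ≤ q) : Λ.segment ρ p q = β := by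
  subst hα
  have hαβq : Λ.d (Λ.comp α β) = q := by
    rw [Λ.d_comp α β hαβ, hβ, add_tsub_cancel_of_le hpq]
  have hρ' : ρ = Λ.comp (Λ.comp α β) γ := by rw [hρ, Λ.comp_assoc α β γ hαβ hβγ]
  have h1 := hαβq ▸ factor_eq (by rw [Λ.s_comp α β hαβ]; exact hβγ) hρ'
  rw [segment, h1, factor_eq hαβ rfl]

lemma r_and_s_segment_self {ρ : Λ.Path} {p : Fin k → ℕ} (hp : p ≤ Λ.d ρ) :
    Λ.r (Λ.segment ρ p p) = Λ.segment ρ p p ∧ Λ.s (Λ.segment ρ p p) = Λ.segment ρ p p :=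
  r_eq_and_s_eq_of_d_eq_zero (by rw [d_segment le_rfl hp, tsub_self])

lemma r_segment {ρ : Λ.Path} {p q : Fin k → ℕ} (hpq : p ≤ q) (hq : q ≤ Λ.d ρ) :
    Λ.r (Λ.segment ρ p q) = Λ.segment ρ p p := by
  have hp := hpq.trans hq
  rw [← (eq_comp_segment hpq hq).1, (eq_comp_segment le_rfl hp).1,
    (r_and_s_segment_self hp).1]

lemma s_segment {ρ : Λ.Path} {p q : Fin k → ℕ} (hpq : p ≤ q) (hq : q ≤ Λ.d ρ) :
    Λ.s (Λ.segment ρ p q) = Λ.segment ρ q q := by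
  rw [(eq_comp_segment hpq hq).2.1, ← (eq_comp_segment le_rfl hq).2.1,
    (r_and_s_segment_self hq).2]

lemma segment_zero_zero (ρ : Λ.Path) : Λ.segment ρ 0 0 = Λ.r ρ := by
  rw [segment_zero_left, factor_zero]

lemma segment_d_d (ρ : Λ.Path) : Λ.segment ρ (Λ.d ρ) (Λ.d ρ) = Λ.s ρ := by
  rw [segment_d_right, factor_d]

lemma segment_zero_comp {ρ : Λ.Path} {p q : Fin k → ℕ} (hpq : p ≤ q) (hq : q ≤ Λ.d ρ) :
    Λ.comp (Λ.segment ρ 0 p) (Λ.segment ρ p q) = Λ.segment ρ 0 q := by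
  obtain ⟨h1, h2, hρ⟩ := eq_comp_segment hpq hq
  have hd : Λ.d (Λ.comp (Λ.segment ρ 0 p) (Λ.segment ρ p q)) = q := by
    rw [Λ.d_comp _ _ h1, d_segment zero_le (hpq.trans hq), d_segment hpq hq,
      tsub_zero, add_tsub_cancel_of_le hpq]
  have hfac := hd ▸ factor_eq (by rw [Λ.s_comp _ _ h1]; exact h2)
    (hρ.trans (Λ.comp_assoc _ _ _ h1 h2).symm)
  rw [segment_zero_left ρ q, hfac]

lemma segment_comp {ρ : Λ.Path} {p q t : Fin k → ℕ} (hpq : p ≤ q) (hqt : q ≤ t)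
    (ht : t ≤ Λ.d ρ) :
    Λ.comp (Λ.segment ρ p q) (Λ.segment ρ q t) = Λ.segment ρ p t := by
  have hq := hqt.trans ht
  obtain ⟨h1, h2, hρ⟩ := eq_comp_segment hqt ht
  have h0 := (eq_comp_segment hpq hq).1
  have h3 : Λ.s (Λ.segment ρ p q) = Λ.r (Λ.segment ρ q t) := by
    rw [s_segment hpq hq, r_segment hqt ht]
  rw [← segment_zero_comp hpq hq] at hρ h1
  have hρ' : ρ = Λ.comp (Λ.segment ρ 0 p)
      (Λ.comp (Λ.comp (Λ.segment ρ p q) (Λ.segment ρ q t)) (Λ.segment ρ t (Λ.d ρ))) := by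
    refine hρ.trans ?_
    rw [Λ.s_comp _ _ h0] at h1
    rw [Λ.comp_assoc _ _ _ h0 (by rw [Λ.r_comp _ _ h2]; exact h1),
      Λ.comp_assoc _ _ _ h3 h2]
  refine (segment_eq_of_comp ?_ ?_ hρ' ?_ ?_ (hpq.trans hqt)).symm
  · rw [Λ.r_comp _ _ h3]; exact h0
  · rw [Λ.s_comp _ _ h3]; exact h2
  · rw [d_segment zero_le (hpq.trans hq), tsub_zero]
  · rw [Λ.d_comp _ _ h3, d_segment hpq hq, d_segment hqt ht, add_comm,
      tsub_add_tsub_cancel hqt hpq]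

lemma segment_comp_left {ρ α β : Λ.Path} (hαβ : Λ.s α = Λ.r β) (hρ : ρ = Λ.comp α β)
    {p q : Fin k → ℕ} (hpq : p ≤ q) (hq : q ≤ Λ.d α) :
    Λ.segment ρ p q = Λ.segment α p q := by
  obtain ⟨h1, h2, hα⟩ := eq_comp_segment hpq hq
  have h3 : Λ.s (Λ.segment α q (Λ.d α)) = Λ.r β := by
    rw [s_segment hq le_rfl, segment_d_d]; exact hαβ
  refine segment_eq_of_comp h1 (by rw [Λ.r_comp _ _ h3]; exact h2) ?_
    (d_segment zero_le (hpq.trans hq)) (d_segment hpq hq) hpq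
  rw [hρ]
  conv_lhs => rw [hα]
  rw [Λ.comp_assoc _ _ _ (by rw [Λ.r_comp _ _ h2]; exact h1) (by rw [Λ.s_comp _ _ h2]; exact h3),
    Λ.comp_assoc _ _ _ h2 h3]

lemma segment_comp_right {ρ α β : Λ.Path} (hαβ : Λ.s α = Λ.r β) (hρ : ρ = Λ.comp α β)
    {q : Fin k → ℕ} (hq : q ≤ Λ.d β) :
    Λ.segment ρ (Λ.d α) (Λ.d α + q) = Λ.segment β 0 q := by
  obtain ⟨hd, -, hsr, hβ⟩ := factor_spec hq
  rw [segment_zero_left]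
  exact segment_eq_of_comp (by rw [← Λ.r_comp _ _ hsr, ← hβ]; exact hαβ) hsr
    (hρ.trans (congrArg (Λ.comp α) hβ)) rfl (by rw [hd, add_tsub_cancel_left]) le_self_add

end Factorization

section LocalConvexity

variable (Λ) in
/-- `v Λ^{e_i} = ∅`. -/
def NoEdge (v : Λ.Path) (i : Fin k) : Prop :=
  ∀ e, Λ.r e = v → Λ.d e ≠ Pi.single i 1

lemma single_one_le_of_pos {ι : Type*} [DecidableEq ι] {f : ι → ℕ} {i : ι} (h : 0 < f i) :
    Pi.single i 1 ≤ f := by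
  intro j
  rcases eq_or_ne j i with rfl | hj
  · simp only [Pi.single_eq_same]; exact h
  · simp [hj]

lemma exists_edge_of_d_pos {ρ : Λ.Path} {i : Fin k} (h : 0 < Λ.d ρ i) :
    ∃ e, Λ.r e = Λ.r ρ ∧ Λ.d e = Pi.single i 1 := by
  obtain ⟨hd, -, hsr, hρ⟩ := factor_spec (single_one_le_of_pos h)
  refine ⟨_, ?_, hd⟩
  rw [← Λ.r_comp _ _ hsr, ← hρ]

/-- Peel off the edges of `τ` one at a time, applying local convexity at each range. -/
lemma exists_edge_s (hlc : Λ.LocallyConvex) {i : Fin k} {τ : Λ.Path}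
    (hτ : Λ.d τ i = 0) (hedge : ∃ e, Λ.r e = Λ.r τ ∧ Λ.d e = Pi.single i 1) :
    ∃ e, Λ.r e = Λ.s τ ∧ Λ.d e = Pi.single i 1 := by
  induction hn : ∑ j, Λ.d τ j generalizing τ with
  | zero =>
    have hv := r_eq_and_s_eq_of_d_eq_zero (funext fun j => by
      simpa using (Finset.sum_eq_zero_iff.mp hn) j (Finset.mem_univ j))
    rwa [hv.2, ← hv.1]
  | succ n ih =>
    obtain ⟨j, hj⟩ : ∃ j, 0 < Λ.d τ j := by
      by_contra! h
      simp [fun j => Nat.le_zero.mp (h j)] at hn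
    have hji : j ≠ i := by rintro rfl; omega
    obtain ⟨e, τ', hed, -, hsr, rfl⟩ : ∃ e τ', Λ.d e = Pi.single j 1 ∧
        Λ.d τ' = Λ.d τ - Pi.single j 1 ∧ Λ.s e = Λ.r τ' ∧ τ = Λ.comp e τ' :=
      ⟨_, _, factor_spec (single_one_le_of_pos hj)⟩
    obtain ⟨g, hgr, hgd⟩ := hedge
    obtain ⟨f, hfr, hfd⟩ := hlc j i hji e g (by rw [hgr, Λ.r_comp _ _ hsr]) hed hgd
    rw [Λ.d_comp _ _ hsr, hed] at hτ hn
    simp only [Pi.add_apply, Pi.single_apply, hji.symm, if_false, zero_add] at hτ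
    simp only [Pi.add_apply, Finset.sum_add_distrib, Finset.sum_pi_single', Finset.mem_univ,
      if_true] at hn
    rw [Λ.s_comp _ _ hsr]
    exact ih hτ ⟨f, hfr.trans hsr, hfd⟩ (by omega)

lemma exists_edge_s_of_segment (hlc : Λ.LocallyConvex) {ρ : Λ.Path} {p : Fin k → ℕ}
    {i : Fin k} (hp : p ≤ Λ.d ρ) (hpi : p i = Λ.d ρ i)
    (hedge : ∃ e, Λ.r e = Λ.segment ρ p p ∧ Λ.d e = Pi.single i 1) :
    ∃ e, Λ.r e = Λ.s ρ ∧ Λ.d e = Pi.single i 1 := by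
  have h := exists_edge_s hlc (τ := Λ.segment ρ p (Λ.d ρ))
    (by rw [d_segment hp le_rfl, Pi.sub_apply, hpi, tsub_self]) (by rwa [r_segment hp le_rfl])
  rwa [s_segment hp le_rfl, segment_d_d] at h

lemma exists_edge_segment_of_lt {ρ : Λ.Path} {p : Fin k → ℕ} {i : Fin k}
    (hp : p ≤ Λ.d ρ) (hpi : p i < Λ.d ρ i) :
    ∃ e, Λ.r e = Λ.segment ρ p p ∧ Λ.d e = Pi.single i 1 := by
  have h := exists_edge_of_d_pos (ρ := Λ.segment ρ p (Λ.d ρ)) (i := i)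
    (by rw [d_segment hp le_rfl, Pi.sub_apply]; omega)
  rwa [r_segment hp le_rfl] at h

/-- A path from `v` with `d τ ≤ p` and maximal `∑ d τ` lies in `Λ^{≤ p}`. -/
lemma exists_mem_boundedPaths {v : Λ.Path} (hv : Λ.IsVertex v) (p : Fin k → ℕ) :
    ∃ τ ∈ Λ.boundedPaths p, Λ.r τ = v := by
  classical
  let P : ℕ → Prop := fun n => ∃ τ, Λ.r τ = v ∧ Λ.d τ ≤ p ∧ ∑ i, Λ.d τ i = n
  have hP0 : P 0 := by
    have hd : Λ.d v = 0 := by rw [← hv]; exact Λ.d_r v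
    exact ⟨v, hv, by simp [hd], by simp [hd]⟩
  obtain ⟨τ, hτr, hτp, hτn⟩ := Nat.findGreatest_spec (P := P) (n := ∑ i, p i) zero_le hP0
  refine ⟨τ, ⟨hτp, fun i hi e he hed => ?_⟩, hτr⟩
  have hsr : Λ.s τ = Λ.r e := he.symm
  have hτe : Λ.d (Λ.comp τ e) = Λ.d τ + Pi.single i 1 := by rw [Λ.d_comp _ _ hsr, hed]
  have hle : Λ.d (Λ.comp τ e) ≤ p := by
    intro j
    rcases eq_or_ne j i with rfl | hj
    · simpa [hτe] using hi
    · simpa [hτe, hj] using hτp j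
  have hsum : ∑ j, Λ.d (Λ.comp τ e) j = Nat.findGreatest P (∑ i, p i) + 1 := by
    simp [hτe, Finset.sum_add_distrib, hτn]
  have := Nat.le_findGreatest (P := P) (hsum ▸ Finset.sum_le_sum fun j _ => hle j)
    ⟨_, by rw [Λ.r_comp _ _ hsr, hτr], hle, hsum⟩
  omega

end LocalConvexity

section Chains

variable (Λ) in
def IsChain (f : ℕ → Λ.Path) : Prop :=
  ∀ n, ∃ τ, Λ.s (f n) = Λ.r τ ∧ f (n + 1) = Λ.comp (f n) τ

variable (Λ) in
/-- Infinitely often, every direction in which `f n` is shorter than a given bound is a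
dead end at `s (f n)`: this makes the limit of the chain a boundary path. -/
def IsChain.Saturating (f : ℕ → Λ.Path) : Prop :=
  ∀ N, ∃ n, N ≤ n ∧ ∀ i, Λ.d (f n) i < N → Λ.NoEdge (Λ.s (f n)) i

namespace IsChain

variable {f : ℕ → Λ.Path} (hf : Λ.IsChain f)
include hf

lemma exists_eq_comp {m n : ℕ} (h : m ≤ n) :
    ∃ τ, Λ.s (f m) = Λ.r τ ∧ f n = Λ.comp (f m) τ := by
  induction n, h using Nat.le_induction with
  | base => exact ⟨Λ.s (f m), (Λ.r_s _).symm, (Λ.comp_id _).symm⟩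
  | succ n _ ih =>
    obtain ⟨τ, h1, h2⟩ := ih
    obtain ⟨τ', h1', h2'⟩ := hf n
    have hττ' : Λ.s τ = Λ.r τ' := by rw [← h1', h2, Λ.s_comp _ _ h1]
    refine ⟨Λ.comp τ τ', by rw [Λ.r_comp _ _ hττ']; exact h1, ?_⟩
    rw [h2', h2, Λ.comp_assoc _ _ _ h1 hττ']

lemma d_mono {m n : ℕ} (h : m ≤ n) : Λ.d (f m) ≤ Λ.d (f n) := by
  obtain ⟨τ, hsr, hn⟩ := hf.exists_eq_comp h
  rw [hn, Λ.d_comp _ _ hsr]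
  exact le_self_add

lemma segment_eq {m n : ℕ} {p q : Fin k → ℕ} (hmn : m ≤ n) (hpq : p ≤ q)
    (hq : q ≤ Λ.d (f m)) : Λ.segment (f n) p q = Λ.segment (f m) p q := by
  obtain ⟨τ, hsr, hn⟩ := hf.exists_eq_comp hmn
  exact segment_comp_left hsr hn hpq hq

end IsChain

variable (Λ) in
noncomputable def chainDeg (f : ℕ → Λ.Path) : Fin k → ℕ∞ :=
  fun i => ⨆ n, (Λ.d (f n) i : ℕ∞)

lemma le_chainDeg (f : ℕ → Λ.Path) (n : ℕ) (i : Fin k) :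
    (Λ.d (f n) i : ℕ∞) ≤ Λ.chainDeg f i :=
  le_iSup (fun n => (Λ.d (f n) i : ℕ∞)) n

lemma IsChain.exists_le_d {f : ℕ → Λ.Path} (hf : Λ.IsChain f) {q : Fin k → ℕ}
    (hq : ∀ i, (q i : ℕ∞) ≤ Λ.chainDeg f i) (M : ℕ) :
    ∃ n, M ≤ n ∧ q ≤ Λ.d (f n) := by
  have hco : ∀ i, ∃ n, q i ≤ Λ.d (f n) i := by
    intro i
    by_contra! h
    have hsup : Λ.chainDeg f i ≤ ((q i - 1 : ℕ) : ℕ∞) :=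
      iSup_le fun n => Nat.cast_le.mpr (by have := h n; omega)
    have := (hq i).trans hsup
    norm_cast at this
    have := h 0
    omega
  choose N hN using hco
  refine ⟨max M (Finset.univ.sup N), le_max_left _ _, fun i => (hN i).trans ?_⟩
  exact hf.d_mono ((Finset.le_sup (Finset.mem_univ i)).trans (le_max_right _ _)) i

open Classical in
variable (Λ) in
noncomputable def chainSeg (f : ℕ → Λ.Path) (p q : Fin k → ℕ) : Λ.Path :=
  if h : ∃ n, q ≤ Λ.d (f n) then Λ.segment (f (Nat.find h)) p q else f 0

lemma IsChain.chainSeg_eq {f : ℕ → Λ.Path} (hf : Λ.IsChain f) {p q : Fin k → ℕ} {n : ℕ}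
    (hpq : p ≤ q) (hq : q ≤ Λ.d (f n)) : Λ.chainSeg f p q = Λ.segment (f n) p q := by
  classical
  have h : ∃ m, q ≤ Λ.d (f m) := ⟨n, hq⟩
  rw [chainSeg, dif_pos h]
  exact (hf.segment_eq (Nat.find_min' h hq) hpq (Nat.find_spec h)).symm

/-- The boundary path `x` with `x(0, d (f n)) = f n` for all `n`. -/
noncomputable def chainLimit (hlc : Λ.LocallyConvex) {f : ℕ → Λ.Path} (hf : Λ.IsChain f)
    (hsat : IsChain.Saturating Λ f) : BoundaryPath Λ where
  deg := Λ.chainDeg f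
  seg := Λ.chainSeg f
  seg_d p q hpq hq := by
    obtain ⟨n, -, hn⟩ := hf.exists_le_d hq 0
    rw [hf.chainSeg_eq hpq hn, d_segment hpq hn]
  seg_r p q hpq hq := by
    obtain ⟨n, -, hn⟩ := hf.exists_le_d hq 0
    rw [hf.chainSeg_eq hpq hn, hf.chainSeg_eq le_rfl (hpq.trans hn), r_segment hpq hn]
  seg_s p q hpq hq := by
    obtain ⟨n, -, hn⟩ := hf.exists_le_d hq 0
    rw [hf.chainSeg_eq hpq hn, hf.chainSeg_eq le_rfl hn, s_segment hpq hn]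
  seg_comp p q t hpq hqt ht := by
    obtain ⟨n, -, hn⟩ := hf.exists_le_d ht 0
    rw [hf.chainSeg_eq hpq (hqt.trans hn), hf.chainSeg_eq hqt hn,
      hf.chainSeg_eq (hpq.trans hqt) hn, segment_comp hpq hqt hn]
  boundary p hp i hpi e he hed := by
    obtain ⟨m, -, hm⟩ := hf.exists_le_d hp 0
    obtain ⟨n, hmn, hn⟩ := hsat (max m (p i + 1))
    have hpn : p ≤ Λ.d (f n) := hm.trans (hf.d_mono ((le_max_left _ _).trans hmn))
    have hdi : Λ.d (f n) i = p i := by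
      have := hpi ▸ le_chainDeg f n i
      norm_cast at this
      exact this.antisymm (hpn i)
    obtain ⟨e', he', hed'⟩ := exists_edge_s_of_segment hlc hpn hdi.symm
      ⟨e, by rw [he, hf.chainSeg_eq le_rfl hpn], hed⟩
    exact hn i (by omega) e' he' hed'

lemma chainLimit_seg (hlc : Λ.LocallyConvex) {f : ℕ → Λ.Path} (hf : Λ.IsChain f)
    (hsat : IsChain.Saturating Λ f) {p q : Fin k → ℕ} {n : ℕ} (hpq : p ≤ q)
    (hq : q ≤ Λ.d (f n)) : (chainLimit hlc hf hsat).seg p q = Λ.segment (f n) p q :=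
  hf.chainSeg_eq hpq hq

end Chains

end KGraph

open KGraph

variable {k : ℕ} {Λ : KGraph k}

lemma ENat.natCast_sub_le_of_le_add {m n : ℕ} {e : ℕ∞} (h : (m : ℕ∞) ≤ n + e) :
    ((m - n : ℕ) : ℕ∞) ≤ e := by
  rw [ENat.natCast_sub]
  exact tsub_le_iff_left.mpr h

lemma natCast_sup_le {p q : Fin k → ℕ} {e : Fin k → ℕ∞} (hp : ∀ i, (p i : ℕ∞) ≤ e i)
    (hq : ∀ i, (q i : ℕ∞) ≤ e i) : ∀ i, ((p ⊔ q) i : ℕ∞) ≤ e i := by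
  intro i
  rcases le_total (p i) (q i) with h | h
  · simpa [h] using hq i
  · simpa [h] using hp i

lemma natCast_le_of_le {p q : Fin k → ℕ} {e : Fin k → ℕ∞} (hpq : p ≤ q)
    (hq : ∀ i, (q i : ℕ∞) ≤ e i) : ∀ i, (p i : ℕ∞) ≤ e i :=
  fun i => (Nat.cast_le.mpr (hpq i)).trans (hq i)

namespace BoundaryPath

lemma seg_eq_segment (x : BoundaryPath Λ) {p q M : Fin k → ℕ} (hpq : p ≤ q) (hqM : q ≤ M)
    (hM : ∀ i, (M i : ℕ∞) ≤ x.deg i) : x.seg p q = Λ.segment (x.seg 0 M) p q := by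
  have hq := natCast_le_of_le hqM hM
  have hp := natCast_le_of_le hpq hq
  refine (segment_eq_of_comp (γ := x.seg q M) ?_ ?_ ?_ (x.seg_d 0 p zero_le hp) (x.seg_d p q hpq hq)
    hpq).symm
  · rw [x.seg_s 0 p zero_le hp, x.seg_r p q hpq hq]
  · rw [x.seg_s p q hpq hq, x.seg_r q M hqM hM]
  · rw [x.seg_comp p q M hpq hqM hM, x.seg_comp 0 p M zero_le (hpq.trans hqM) hM]

lemma bpEq_of_seg_zero_eq {x y : BoundaryPath Λ} (hdeg : x.deg = y.deg) {L : Fin k → ℕ}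
    (hL : ∀ i, (L i : ℕ∞) ≤ x.deg i)
    (h : ∀ M, L ≤ M → (∀ i, (M i : ℕ∞) ≤ x.deg i) → x.seg 0 M = y.seg 0 M) : BPEq x y := by
  refine ⟨hdeg, fun p q hpq hq => ?_⟩
  have hM := natCast_sup_le hq hL
  rw [x.seg_eq_segment hpq le_sup_left hM, y.seg_eq_segment hpq le_sup_left (hdeg ▸ hM),
    h _ le_sup_right hM]

end BoundaryPath

namespace IsExtension

variable {lam : Λ.Path} {x y : BoundaryPath Λ} (hxy : IsExtension Λ lam x y)
include hxy

lemma add_le_deg {q : Fin k → ℕ} (hq : ∀ i, (q i : ℕ∞) ≤ x.deg i) :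
    ∀ i, ((Λ.d lam + q) i : ℕ∞) ≤ y.deg i := by
  intro i
  rw [hxy.1 i, Pi.add_apply, Nat.cast_add]
  exact add_le_add_right (hq i) _

lemma d_le_deg : ∀ i, (Λ.d lam i : ℕ∞) ≤ y.deg i :=
  fun i => hxy.1 i ▸ le_self_add

lemma seg_zero_add {q : Fin k → ℕ} (hq : ∀ i, (q i : ℕ∞) ≤ x.deg i) :
    y.seg 0 (Λ.d lam + q) = Λ.comp lam (x.seg 0 q) := by
  rw [← y.seg_comp 0 (Λ.d lam) _ zero_le le_self_add (hxy.add_le_deg hq), hxy.2.1,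
    hxy.2.2 q hq]

lemma seg_add_add {p q : Fin k → ℕ} (hpq : p ≤ q) (hq : ∀ i, (q i : ℕ∞) ≤ x.deg i) :
    y.seg (Λ.d lam + p) (Λ.d lam + q) = x.seg p q := by
  have hp := natCast_le_of_le hpq hq
  have hle : Λ.d lam + p ≤ Λ.d lam + q := by gcongr
  have hyq := hxy.add_le_deg hq
  have hsr : Λ.s (x.seg 0 p) = Λ.r (y.seg (Λ.d lam + p) (Λ.d lam + q)) := by
    rw [y.seg_r _ _ hle hyq, ← hxy.2.2 p hp, y.seg_s _ _ le_self_add (hxy.add_le_deg hp)]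
  refine comp_left_cancel hsr (by rw [x.seg_s 0 p zero_le hp, x.seg_r p q hpq hq]) ?_
  rw [x.seg_comp 0 p q zero_le hpq hq, ← hxy.2.2 p hp, ← hxy.2.2 q hq,
    y.seg_comp _ _ _ le_self_add hle hyq]

lemma bpEq {z : BoundaryPath Λ} (hxz : IsExtension Λ lam x z) : BPEq y z := by
  have hdeg : y.deg = z.deg := funext fun i => by rw [hxy.1 i, hxz.1 i]
  refine BoundaryPath.bpEq_of_seg_zero_eq hdeg hxy.d_le_deg fun M hM hMy => ?_
  have hq : ∀ i, ((M - Λ.d lam) i : ℕ∞) ≤ x.deg i :=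
    fun i => ENat.natCast_sub_le_of_le_add (hxy.1 i ▸ hMy i)
  rw [← add_tsub_cancel_of_le hM, hxy.seg_zero_add hq, hxz.seg_zero_add hq]

variable {ν : Λ.Path} {z : BoundaryPath Λ} (hxz : IsExtension Λ ν x z)
include hxz

lemma eq_of_bpEq (hyz : BPEq y z) (hd : Λ.d lam = Λ.d ν) : lam = ν := by
  have := hyz.2 0 (Λ.d lam) zero_le hxy.d_le_deg
  rwa [hxy.2.1, hd, hxz.2.1] at this

lemma deg_eq_top_of_deg_eq (hdeg : y.deg = z.deg) {i : Fin k} (hi : Λ.d lam i ≠ Λ.d ν i) :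
    x.deg i = ⊤ := by
  by_contra hne
  obtain ⟨D, hD⟩ := ENat.ne_top_iff_exists.mp hne
  have := congrFun hdeg i
  rw [hxy.1 i, hxz.1 i, ← hD] at this
  norm_cast at this
  omega

lemma sup_tsub_le_deg (hdeg : y.deg = z.deg) :
    ∀ i, ((Λ.d lam ⊔ Λ.d ν - Λ.d lam) i : ℕ∞) ≤ x.deg i := by
  intro i
  by_cases hi : Λ.d lam i = Λ.d ν i
  · simp [hi]
  · simp [hxy.deg_eq_top_of_deg_eq hxz hdeg hi]

lemma seg_eq_seg_of_bpEq (hyz : BPEq y z) {t : Fin k → ℕ}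
    (ht : ∀ i, ((Λ.d lam ⊔ Λ.d ν - Λ.d lam + t) i : ℕ∞) ≤ x.deg i)
    (ht' : ∀ i, ((Λ.d lam ⊔ Λ.d ν - Λ.d ν + t) i : ℕ∞) ≤ x.deg i) :
    x.seg (Λ.d lam ⊔ Λ.d ν - Λ.d lam) (Λ.d lam ⊔ Λ.d ν - Λ.d lam + t) =
      x.seg (Λ.d lam ⊔ Λ.d ν - Λ.d ν) (Λ.d lam ⊔ Λ.d ν - Λ.d ν + t) := by
  have hyt := hxy.add_le_deg ht
  rw [← add_assoc, add_tsub_cancel_of_le le_sup_left] at hyt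
  rw [← hxy.seg_add_add le_self_add ht, ← hxz.seg_add_add le_self_add ht', ← add_assoc,
    ← add_assoc, add_tsub_cancel_of_le le_sup_left, add_tsub_cancel_of_le le_sup_right]
  exact hyz.2 _ _ le_self_add hyt

end IsExtension

namespace KGraph

section Extensions

lemma natCast_emin (m : Fin k → ℕ) (e : Fin k → ℕ∞) (i : Fin k) :
    (emin m e i : ℕ∞) = min (m i : ℕ∞) (e i) :=
  ENat.natCast_toNat (ne_top_of_le_ne_top (ENat.natCast_ne_top (m i)) (min_le_left _ _))

lemma natCast_emin_le (m : Fin k → ℕ) (e : Fin k → ℕ∞) (i : Fin k) :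
    (emin m e i : ℕ∞) ≤ e i :=
  (natCast_emin m e i).trans_le (min_le_right _ _)

lemma emin_mono {m m' : Fin k → ℕ} (h : m ≤ m') (e : Fin k → ℕ∞) : emin m e ≤ emin m' e := by
  intro i
  exact_mod_cast (natCast_emin m e i).trans_le
    ((min_le_min_right _ (Nat.cast_le.mpr (h i))).trans (natCast_emin m' e i).symm.le)

lemma le_emin {p m : Fin k → ℕ} {e : Fin k → ℕ∞} (hm : p ≤ m) (he : ∀ i, (p i : ℕ∞) ≤ e i) :
    p ≤ emin m e := by
  intro i
  exact_mod_cast (le_min (Nat.cast_le.mpr (hm i)) (he i)).trans (natCast_emin m e i).symm.le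

variable (Λ) in
/-- `μ x(0, n ∧ d x)`: the chain whose limit is `μ x`. -/
noncomputable def extensionChain (μ : Λ.Path) (x : BoundaryPath Λ) (n : ℕ) : Λ.Path :=
  Λ.comp μ (x.seg 0 (emin (fun _ => n) x.deg))

variable {μ : Λ.Path} {x : BoundaryPath Λ}

lemma s_eq_r_seg_emin (hx : x.seg 0 0 = Λ.s μ) (m : Fin k → ℕ) :
    Λ.s μ = Λ.r (x.seg 0 (emin m x.deg)) := by
  rw [x.seg_r _ _ zero_le (natCast_emin_le m x.deg), hx]

lemma d_extensionChain (hx : x.seg 0 0 = Λ.s μ) (n : ℕ) :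
    Λ.d (Λ.extensionChain μ x n) = Λ.d μ + emin (fun _ => n) x.deg := by
  rw [extensionChain, Λ.d_comp _ _ (s_eq_r_seg_emin hx _),
    x.seg_d _ _ zero_le (natCast_emin_le _ x.deg), tsub_zero]

lemma isChain_extensionChain (hx : x.seg 0 0 = Λ.s μ) :
    Λ.IsChain (Λ.extensionChain μ x) := by
  intro n
  have hmono := emin_mono (fun _ => Nat.le_succ n) x.deg
  have hsr : Λ.s (x.seg 0 (emin (fun _ => n) x.deg)) =
      Λ.r (x.seg (emin (fun _ => n) x.deg) (emin (fun _ => n + 1) x.deg)) := by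
    rw [x.seg_s _ _ zero_le (natCast_emin_le _ x.deg), x.seg_r _ _ hmono (natCast_emin_le _ x.deg)]
  refine ⟨_, by rw [extensionChain, Λ.s_comp _ _ (s_eq_r_seg_emin hx _)]; exact hsr, ?_⟩
  rw [extensionChain, extensionChain, Λ.comp_assoc _ _ _ (s_eq_r_seg_emin hx _) hsr,
    x.seg_comp _ _ _ zero_le hmono (natCast_emin_le _ x.deg)]

lemma saturating_extensionChain (hx : x.seg 0 0 = Λ.s μ) :
    IsChain.Saturating Λ (Λ.extensionChain μ x) := by
  refine fun N => ⟨N, le_rfl, fun i hi => ?_⟩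
  rw [d_extensionChain hx, Pi.add_apply] at hi
  have hdeg : (emin (fun _ => N) x.deg i : ℕ∞) = x.deg i := by
    rw [natCast_emin]
    refine min_eq_right (le_of_not_ge fun h => ?_)
    have := natCast_emin (fun _ => N) x.deg i
    rw [min_eq_left h] at this
    norm_cast at this
    omega
  rw [extensionChain, Λ.s_comp _ _ (s_eq_r_seg_emin hx _),
    x.seg_s _ _ zero_le (natCast_emin_le _ x.deg)]
  exact x.boundary _ (natCast_emin_le _ x.deg) i hdeg

lemma exists_extension (hlc : Λ.LocallyConvex) (x : BoundaryPath Λ) (μ : Λ.Path)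
    (hx : x.seg 0 0 = Λ.s μ) : ∃ y, IsExtension Λ μ x y := by
  have hf := isChain_extensionChain hx
  refine ⟨chainLimit hlc hf (saturating_extensionChain hx), fun i => ?_, ?_, fun p hp => ?_⟩
  · change ⨆ n, (Λ.d (Λ.extensionChain μ x n) i : ℕ∞) = _
    simp_rw [d_extensionChain hx, Pi.add_apply, Nat.cast_add, natCast_emin, ← ENat.add_iSup,
      ← iSup_inf_eq, ENat.iSup_natCast, top_inf_eq]
  · rw [chainLimit_seg hlc hf _ zero_le (n := 0) (by rw [d_extensionChain hx]; exact le_self_add),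
      extensionChain, segment_comp_left (s_eq_r_seg_emin hx _) rfl zero_le le_rfl, segment_zero_d]
  · have hpn : p ≤ emin (fun _ => Finset.univ.sup p) x.deg :=
      le_emin (fun i => Finset.le_sup (Finset.mem_univ i)) hp
    have hseg := natCast_emin_le (fun _ => Finset.univ.sup p) x.deg
    rw [chainLimit_seg hlc hf _ le_self_add (by rw [d_extensionChain hx]; gcongr),
      extensionChain, segment_comp_right (s_eq_r_seg_emin hx _) rfl
        (by rw [x.seg_d _ _ zero_le hseg, tsub_zero]; exact hpn),
      x.seg_eq_segment zero_le hpn hseg]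

end Extensions

section Agreement

variable (Λ) in
def Separates (a b : Fin k → ℕ) (ρ : Λ.Path) : Prop :=
  ∃ t, a + t ≤ Λ.d ρ ∧ b + t ≤ Λ.d ρ ∧ Λ.segment ρ a (a + t) ≠ Λ.segment ρ b (b + t)

variable (Λ) in
def Agree (a b : Fin k → ℕ) (lam : Λ.Path) : Prop :=
  ∀ τ, Λ.s lam = Λ.r τ → ¬ Λ.Separates a b (Λ.comp lam τ)

variable {a b : Fin k → ℕ}

lemma Separates.comp {ρ τ : Λ.Path} (h : Λ.Separates a b ρ) (hsr : Λ.s ρ = Λ.r τ) :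
    Λ.Separates a b (Λ.comp ρ τ) := by
  obtain ⟨t, hat, hbt, hne⟩ := h
  have hd : Λ.d ρ ≤ Λ.d (Λ.comp ρ τ) := by rw [Λ.d_comp _ _ hsr]; exact le_self_add
  refine ⟨t, hat.trans hd, hbt.trans hd, ?_⟩
  rwa [segment_comp_left hsr rfl le_self_add hat, segment_comp_left hsr rfl le_self_add hbt]

namespace Agree

variable {lam : Λ.Path}

lemma symm (h : Λ.Agree a b lam) : Λ.Agree b a lam := by
  rintro τ hτ ⟨t, hbt, hat, hne⟩
  exact h τ hτ ⟨t, hat, hbt, hne.symm⟩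

lemma comp (h : Λ.Agree a b lam) {τ : Λ.Path} (hsr : Λ.s lam = Λ.r τ) :
    Λ.Agree a b (Λ.comp lam τ) := by
  intro τ' hτ'
  rw [Λ.s_comp _ _ hsr] at hτ'
  rw [Λ.comp_assoc _ _ _ hsr hτ']
  exact h _ (by rw [Λ.r_comp _ _ hτ']; exact hsr)

lemma segment_eq (h : Λ.Agree a b lam) {τ : Λ.Path} (hsr : Λ.s lam = Λ.r τ)
    {t : Fin k → ℕ} (hat : a + t ≤ Λ.d (Λ.comp lam τ)) (hbt : b + t ≤ Λ.d (Λ.comp lam τ)) :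
    Λ.segment (Λ.comp lam τ) a (a + t) = Λ.segment (Λ.comp lam τ) b (b + t) :=
  not_not.mp fun hne => h τ hsr ⟨t, hat, hbt, hne⟩

/-- If `w` had finite degree `D` in direction `i`, then in `ρ = lam w(0, D e_i)` the
agreeing vertices `ρ(a + t)` and `ρ(b + t)`, with `(b + t)_i = (d ρ)_i`, would carry an
`e_i`-edge which local convexity pushes to `s ρ = w(D e_i)`, against `D = (d w)_i`. -/
lemma deg_eq_top (hlc : Λ.LocallyConvex) (ha : a ≤ Λ.d lam) (hb : b ≤ Λ.d lam)
    (h : Λ.Agree a b lam) {w : BoundaryPath Λ} (hw : w.seg 0 0 = Λ.s lam) {i : Fin k}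
    (hab : a i < b i) : w.deg i = ⊤ := by
  by_contra hne
  have hD : ((w.deg i).toNat : ℕ∞) = w.deg i := ENat.natCast_toNat hne
  set T : Fin k → ℕ := Pi.single i (w.deg i).toNat
  have hT : ∀ j, (T j : ℕ∞) ≤ w.deg j := by
    intro j
    rcases eq_or_ne j i with rfl | hj
    · simp [T, hD]
    · simp [T, hj]
  have hsr : Λ.s lam = Λ.r (w.seg 0 T) := by rw [w.seg_r 0 T zero_le hT, hw]
  set ρ := Λ.comp lam (w.seg 0 T)
  have hdρ : Λ.d lam ≤ Λ.d ρ := by rw [Λ.d_comp _ _ hsr]; exact le_self_add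
  have habρ : a ⊔ b ≤ Λ.d ρ := (sup_le ha hb).trans hdρ
  set t := Λ.d ρ - (a ⊔ b)
  have hat : a + t ≤ Λ.d ρ :=
    (add_le_add_left le_sup_left t).trans (add_tsub_cancel_of_le habρ).le
  have hbt : b + t ≤ Λ.d ρ :=
    (add_le_add_left le_sup_right t).trans (add_tsub_cancel_of_le habρ).le
  have hmax : (a ⊔ b) i = b i := max_eq_right hab.le
  have hbi : (b + t) i = Λ.d ρ i := by
    have := habρ i
    simp only [t, Pi.add_apply, Pi.sub_apply, hmax] at this ⊢
    omega
  have hai : (a + t) i < Λ.d ρ i := by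
    have := habρ i
    simp only [t, Pi.add_apply, Pi.sub_apply, hmax] at this ⊢
    omega
  have hvert : Λ.segment ρ (a + t) (a + t) = Λ.segment ρ (b + t) (b + t) := by
    rw [← s_segment le_self_add hat, ← s_segment le_self_add hbt, h.segment_eq hsr hat hbt]
  obtain ⟨e, he, hed⟩ := exists_edge_s_of_segment hlc hbt hbi
    (hvert ▸ exists_edge_segment_of_lt hat hai)
  rw [Λ.s_comp _ _ hsr, w.seg_s 0 T zero_le hT] at he
  exact w.boundary T hT i (by simp [T, hD]) e he hed

end Agree

lemma add_eq_add_tsub_tsub {c d M : Fin k → ℕ} (hc : c ≤ d) (hM : d - c ≤ M) :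
    c + M = d + (M - (d - c)) := by
  rw [← add_tsub_cancel_of_le hM, ← add_assoc, add_tsub_cancel_of_le hc, add_tsub_cancel_left]

lemma seg_zero_eq_segment_comp {lam : Λ.Path} {c : Fin k → ℕ} (hc : c ≤ Λ.d lam)
    {w Y : BoundaryPath Λ} (hw : w.seg 0 0 = Λ.s lam)
    (hY : IsExtension Λ (Λ.segment lam c (Λ.d lam)) w Y) {M S : Fin k → ℕ}
    (hM : Λ.d lam - c ≤ M) (hMS : M - (Λ.d lam - c) ≤ S) (hS : ∀ i, (S i : ℕ∞) ≤ w.deg i) :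
    Y.seg 0 M = Λ.segment (Λ.comp lam (w.seg 0 S)) c (c + M) := by
  set s := M - (Λ.d lam - c)
  have hs := natCast_le_of_le hMS hS
  have hsr : Λ.s lam = Λ.r (w.seg 0 S) := by rw [w.seg_r 0 S zero_le hS, hw]
  have hdS : Λ.d (w.seg 0 S) = S := by rw [w.seg_d 0 S zero_le hS, tsub_zero]
  have hMs : M = Λ.d (Λ.segment lam c (Λ.d lam)) + s := by
    rw [d_segment hc le_rfl, add_tsub_cancel_of_le hM]
  have hdρ : Λ.d lam + s ≤ Λ.d (Λ.comp lam (w.seg 0 S)) := by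
    rw [Λ.d_comp _ _ hsr, hdS]; gcongr
  rw [hMs, hY.seg_zero_add hs, ← hMs, add_eq_add_tsub_tsub hc hM, ← segment_comp hc le_self_add hdρ,
    segment_comp_left hsr rfl hc le_rfl,
    segment_comp_right hsr rfl (by rw [hdS]; exact hMS), w.seg_eq_segment zero_le hMS hS]


lemma peq_of_agree (hlc : Λ.LocallyConvex) {lam : Λ.Path} (ha : a ≤ Λ.d lam)
    (hb : b ≤ Λ.d lam) (h : Λ.Agree a b lam) :
    Λ.peq (Λ.segment lam a (Λ.d lam)) (Λ.segment lam b (Λ.d lam)) := by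
  have hsa : Λ.s (Λ.segment lam a (Λ.d lam)) = Λ.s lam := by
    rw [s_segment ha le_rfl, segment_d_d]
  have hsb : Λ.s (Λ.segment lam b (Λ.d lam)) = Λ.s lam := by
    rw [s_segment hb le_rfl, segment_d_d]
  refine ⟨hsa.trans hsb.symm, fun w Y Z hw hY hZ => ?_⟩
  rw [hsa] at hw
  have hdeg : Y.deg = Z.deg := funext fun i => by
    rw [hY.1 i, hZ.1 i, d_segment ha le_rfl, d_segment hb le_rfl]
    rcases lt_trichotomy (a i) (b i) with hab | hab | hab
    · simp [h.deg_eq_top hlc ha hb hw hab]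
    · simp [hab]
    · simp [h.symm.deg_eq_top hlc hb ha hw hab]
  refine BoundaryPath.bpEq_of_seg_zero_eq hdeg
    (natCast_sup_le hY.d_le_deg (hdeg ▸ hZ.d_le_deg)) fun M hM hMY => ?_
  rw [d_segment ha le_rfl, d_segment hb le_rfl] at hM
  set S := (M - (Λ.d lam - a)) ⊔ (M - (Λ.d lam - b))
  have hS : ∀ i, (S i : ℕ∞) ≤ w.deg i := by
    refine natCast_sup_le (fun i => ENat.natCast_sub_le_of_le_add ?_) (fun i => ENat.natCast_sub_le_of_le_add ?_)
    · rw [← d_segment ha le_rfl, ← hY.1 i]; exact hMY i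
    · rw [← d_segment hb le_rfl, ← hZ.1 i, ← hdeg]; exact hMY i
  have hsr : Λ.s lam = Λ.r (w.seg 0 S) := by rw [w.seg_r 0 S zero_le hS, hw]
  have hd : Λ.d (Λ.comp lam (w.seg 0 S)) = Λ.d lam + S := by
    rw [Λ.d_comp _ _ hsr, w.seg_d 0 S zero_le hS, tsub_zero]
  rw [seg_zero_eq_segment_comp ha hw hY (le_sup_left.trans hM) le_sup_left hS,
    seg_zero_eq_segment_comp hb hw hZ (le_sup_right.trans hM) le_sup_right hS]
  refine h.segment_eq hsr ?_ ?_ <;> rw [hd]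
  · rw [add_eq_add_tsub_tsub ha (le_sup_left.trans hM)]; exact add_le_add_right le_sup_left _
  · rw [add_eq_add_tsub_tsub hb (le_sup_right.trans hM)]; exact add_le_add_right le_sup_right _

end Agreement

section Aperiodicity

lemma eq_of_agree (hlc : Λ.LocallyConvex) (hper : Λ.Per = {0}) {a b : Fin k → ℕ}
    {lam : Λ.Path} (ha : a ≤ Λ.d lam) (hb : b ≤ Λ.d lam) (h : Λ.Agree a b lam) : a = b := by
  have hmem : _ ∈ Λ.Per := ⟨_, _, peq_of_agree hlc ha hb h, rfl⟩
  rw [hper, Set.mem_singleton_iff] at hmem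
  funext i
  have := congrFun hmem i
  simp only [d_segment ha le_rfl, d_segment hb le_rfl, Pi.sub_apply, Pi.zero_apply] at this
  have hai : a i ≤ Λ.d lam i := ha i
  have hbi : b i ≤ Λ.d lam i := hb i
  omega

open Classical in
variable (Λ) in
noncomputable def separate (a b : Fin k → ℕ) (ρ : Λ.Path) : Λ.Path :=
  if h : ∃ τ, Λ.s ρ = Λ.r τ ∧ Λ.Separates a b (Λ.comp ρ τ) then Λ.comp ρ h.choose else ρ

lemma exists_separate_eq_comp (a b : Fin k → ℕ) (ρ : Λ.Path) :
    ∃ τ, Λ.s ρ = Λ.r τ ∧ Λ.separate a b ρ = Λ.comp ρ τ := by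
  unfold separate
  split_ifs with h
  · exact ⟨_, h.choose_spec.1, rfl⟩
  · exact ⟨Λ.s ρ, (Λ.r_s ρ).symm, (Λ.comp_id ρ).symm⟩

lemma separates_separate {a b : Fin k → ℕ} {ρ : Λ.Path} (h : ¬ Λ.Agree a b ρ) :
    Λ.Separates a b (Λ.separate a b ρ) := by
  unfold Agree at h
  push Not at h
  rw [separate, dif_pos h]
  exact h.choose_spec.2

variable (Λ) in
/-- A path in `s(ρ) Λ^{≤ (n, …, n)}`. -/
noncomputable def boundedStep (ρ : Λ.Path) (n : ℕ) : Λ.Path :=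
  (exists_mem_boundedPaths (isVertex_s ρ) fun _ => n).choose

lemma boundedStep_spec (ρ : Λ.Path) (n : ℕ) :
    Λ.boundedStep ρ n ∈ Λ.boundedPaths (fun _ => n) ∧ Λ.r (Λ.boundedStep ρ n) = Λ.s ρ :=
  (exists_mem_boundedPaths (isVertex_s ρ) fun _ => n).choose_spec

variable (Λ) in
/-- Separate `a` from `b` if some extension does, then make every direction in which the
path is shorter than `n` a dead end. -/
noncomputable def separatingStep (a b : Fin k → ℕ) (n : ℕ) (ρ : Λ.Path) : Λ.Path :=
  Λ.comp (Λ.separate a b ρ) (Λ.boundedStep (Λ.separate a b ρ) n)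

lemma exists_separatingStep_eq_comp (a b : Fin k → ℕ) (n : ℕ) (ρ : Λ.Path) :
    ∃ τ, Λ.s ρ = Λ.r τ ∧ Λ.separatingStep a b n ρ = Λ.comp ρ τ := by
  obtain ⟨τ, hsr, hτ⟩ := exists_separate_eq_comp a b ρ
  have hsr' : Λ.s τ = Λ.r (Λ.boundedStep (Λ.separate a b ρ) n) := by
    rw [(boundedStep_spec _ n).2, hτ, Λ.s_comp _ _ hsr]
  refine ⟨Λ.comp τ _, by rw [Λ.r_comp _ _ hsr']; exact hsr, ?_⟩
  rw [separatingStep, ← Λ.comp_assoc _ _ _ hsr hsr', ← hτ]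

lemma separates_separatingStep {a b : Fin k → ℕ} (n : ℕ) {ρ : Λ.Path} (h : ¬ Λ.Agree a b ρ) :
    Λ.Separates a b (Λ.separatingStep a b n ρ) :=
  (separates_separate h).comp (boundedStep_spec _ n).2.symm

lemma noEdge_separatingStep (a b : Fin k → ℕ) {n : ℕ} (ρ : Λ.Path) {i : Fin k}
    (hi : Λ.d (Λ.separatingStep a b n ρ) i < n) :
    Λ.NoEdge (Λ.s (Λ.separatingStep a b n ρ)) i := by
  obtain ⟨⟨-, hbd⟩, hr⟩ := boundedStep_spec (Λ.separate a b ρ) n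
  have hsr : Λ.s (Λ.separate a b ρ) = Λ.r (Λ.boundedStep (Λ.separate a b ρ) n) := hr.symm
  rw [separatingStep, Λ.d_comp _ _ hsr, Pi.add_apply] at hi
  rw [separatingStep, Λ.s_comp _ _ hsr]
  exact hbd i (by show _ < n; omega)

variable (Λ) in
noncomputable def separatingChain (g : ℕ → (Fin k → ℕ) × (Fin k → ℕ)) (v : Λ.Path) :
    ℕ → Λ.Path
  | 0 => v
  | n + 1 => Λ.separatingStep (g n).1 (g n).2 n (separatingChain g v n)

lemma isChain_separatingChain (g : ℕ → (Fin k → ℕ) × (Fin k → ℕ)) (v : Λ.Path) :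
    Λ.IsChain (Λ.separatingChain g v) :=
  fun n => exists_separatingStep_eq_comp _ _ n _

lemma saturating_separatingChain (g : ℕ → (Fin k → ℕ) × (Fin k → ℕ)) (v : Λ.Path) :
    IsChain.Saturating Λ (Λ.separatingChain g v) :=
  fun N => ⟨N + 1, Nat.le_succ N, fun _ hi => noEdge_separatingStep _ _ _ hi⟩

lemma aperiodic_of_per_eq_zero (hlc : Λ.LocallyConvex) (hper : Λ.Per = {0}) :
    Λ.Aperiodic := by
  intro v hv
  obtain ⟨g, hg⟩ := exists_surjective_nat ((Fin k → ℕ) × (Fin k → ℕ))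
  have hf := isChain_separatingChain g v
  have hsat := saturating_separatingChain g v
  refine ⟨chainLimit hlc hf hsat, ?_,
    fun μ ν _ _ hne y z hy hz hyz => ?_⟩
  · rw [chainLimit_seg hlc hf _ le_rfl (n := 0) zero_le, segment_zero_zero]
    exact hv
  set a := Λ.d μ ⊔ Λ.d ν - Λ.d μ
  set b := Λ.d μ ⊔ Λ.d ν - Λ.d ν
  have hab : a ≠ b := fun h =>
    hne (hy.eq_of_bpEq hz hyz ((tsub_right_inj le_sup_left le_sup_right).mp h))
  obtain ⟨n, hn⟩ := hg (a, b)
  by_cases hag : Λ.Agree a b (Λ.separatingChain g v n)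
  · obtain ⟨m, hnm, hm⟩ := hf.exists_le_d (natCast_sup_le (hy.sup_tsub_le_deg hz hyz.1)
      (by have := hz.sup_tsub_le_deg hy hyz.1.symm; rwa [sup_comm] at this)) n
    obtain ⟨τ, hsr, hfm⟩ := hf.exists_eq_comp hnm
    exact hab (eq_of_agree hlc hper (le_sup_left.trans hm) (le_sup_right.trans hm)
      (hfm ▸ hag.comp hsr))
  · obtain ⟨t, hat, hbt, hseg⟩ := separates_separatingStep n hag
    have hfn : Λ.separatingChain g v (n + 1) =
        Λ.separatingStep a b n (Λ.separatingChain g v n) := by rw [separatingChain, hn]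
    rw [← hfn] at hat hbt hseg
    rw [← chainLimit_seg hlc hf hsat le_self_add hat,
      ← chainLimit_seg hlc hf hsat le_self_add hbt] at hseg
    exact hseg (hy.seg_eq_seg_of_bpEq hz hyz
      (fun i => (Nat.cast_le.mpr (hat i)).trans (le_chainDeg _ _ i))
      (fun i => (Nat.cast_le.mpr (hbt i)).trans (le_chainDeg _ _ i)))

end Aperiodicity

lemma peq_refl (μ : Λ.Path) : Λ.peq μ μ :=
  ⟨rfl, fun _ _ _ _ hy hz => hy.bpEq hz⟩

lemma per_eq_zero_of_forall_peq_eq (h : ∀ μ ν : Λ.Path, Λ.peq μ ν → μ = ν) :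
    Λ.Per = {0} := by
  refine Set.eq_singleton_iff_unique_mem.mpr ⟨?_, ?_⟩
  · obtain ⟨μ⟩ := Λ.nonempty_path
    exact ⟨μ, μ, peq_refl μ, by ext; simp⟩
  · rintro _ ⟨μ, ν, hμν, rfl⟩
    ext
    simp [h μ ν hμν]

lemma forall_peq_eq_of_aperiodic (hlc : Λ.LocallyConvex) (hap : Λ.Aperiodic) :
    ∀ μ ν : Λ.Path, Λ.peq μ ν → μ = ν := by
  intro μ ν hμν
  by_contra hne
  obtain ⟨x, hx, hsep⟩ := hap (Λ.s μ) (isVertex_s μ)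
  obtain ⟨y, hy⟩ := exists_extension hlc x μ hx
  obtain ⟨z, hz⟩ := exists_extension hlc x ν (hx.trans hμν.1)
  exact hsep μ ν rfl hμν.1.symm hne y z hy hz (hμν.2 x y z hx hy hz)

end KGraph

theorem statement1_general {k : ℕ} (Λ : KGraph k) (hlc : Λ.LocallyConvex) :
    (Λ.Aperiodic ↔ Λ.Per = {0}) ∧
    (Λ.Per = {0} ↔ ∀ μ ν : Λ.Path, Λ.peq μ ν → μ = ν) := by
  have hap := KGraph.forall_peq_eq_of_aperiodic hlc
  have hper := KGraph.aperiodic_of_per_eq_zero hlc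
  have hrigid := @KGraph.per_eq_zero_of_forall_peq_eq k Λ
  exact ⟨⟨fun h => hrigid (hap h), hper⟩, ⟨fun h => hap (hper h), hrigid⟩⟩

/-- Proposition 3.3: For a locally convex row-finite
`k`-graph `Λ`, the following are equivalent: (1) `Λ` is aperiodic;
(2) `Per(Λ) = {0}`; (3) there are no distinct `μ, ν ∈ Λ` with `μ ∼_Λ ν`. -/
theorem statement1 {k : ℕ} (Λ : KGraph k) (hlc : Λ.LocallyConvex)
    (hrf : Λ.RowFinite) :
    (Λ.Aperiodic ↔ Λ.Per = {0}) ∧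
    (Λ.Per = {0} ↔ ∀ μ ν : Λ.Path, Λ.peq μ ν → μ = ν) :=
  statement1_general Λ hlc
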